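/- arXiv:2106.15906 — 2 statements merged into one kernel-verified Lean document; each statement's English description precedes it below -/
import Mathlib

section
/- Let p be a prime number, let Γ be a group, and let N be a normal subgroup of Γ such that the quotient group Γ/N has bounded finite subgroups (i.e., there exists a constant B such that every finite subgroup of Γ/N has order at most B). Suppose that N is p-Jordan, i.e., there exist constants J and e such that every finite subgroup G' of N contains a normal abelian subgroup of order coprime to p and index at most J·|G'_p|^e, where G'_p is a p-Sylow subgroup of G'. Then Γ is p-Jordan: there exist constants J' and e' such that every finite subgroup G of Γ contains a normal abelian subgroup of order coprime to p and index at most J'·|G_p|^{e'}, where G_p is a p-Sylow subgroup of G. -/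
/-! For a finite `G ≤ Γ` put `K = G ∩ N`. Since `G/K` embeds in `Γ/N`, `[G : K] ≤ B`, and the
`p`-Jordan property of `N` gives a normal abelian `p'`-subgroup `A` of `K` with
`[K : A] ≤ J |K_p|^e ≤ J |G_p|^e`. As `K` normalizes `A`, `A` has at most `[G : K]` conjugates in
`G`; their intersection, the normal core of `A`, is a normal abelian `p'`-subgroup of `G` of index
at most `[G : A]^[G : K] ≤ (J B |G_p|^e)^B`. -/

open Subgroup

namespace Subgroup

variable {G : Type*} [Group G]

theorem isMulCommutative_of_le {H K : Subgroup G} [IsMulCommutative K] (h : H ≤ K) :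
    IsMulCommutative H :=
  ⟨⟨fun a b => Subtype.ext (setLike_mul_comm (h a.2) (h b.2))⟩⟩

theorem map_conj_eq_map_conj_out {A K : Subgroup G} (hK : K ≤ normalizer A) (g : G) :
    A.map (MulAut.conj g : G →* G) = A.map (MulAut.conj (g : G ⧸ K).out : G →* G) := by
  have hk : (g : G ⧸ K).out⁻¹ * g ∈ K :=
    QuotientGroup.leftRel_apply.mp (Quotient.mk_out (s := QuotientGroup.leftRel K) g)
  conv_lhs => rw [← mul_inv_cancel_left (g : G ⧸ K).out g, map_mul, MulAut.mul_def]
  rw [MulEquiv.coe_monoidHom_trans, ← map_map, mem_normalizer_iff_map_conj_eq.mp (hK hk)]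

theorem normalCore_eq_iInf_map_conj_out {A K : Subgroup G} (hK : K ≤ normalizer A) :
    A.normalCore = ⨅ q : G ⧸ K, A.map (MulAut.conj q.out : G →* G) := by
  refine le_antisymm (le_iInf fun q => ?_) (normalCore_eq_iInf_map_conj A ▸ le_iInf fun g => ?_)
  · exact normalCore_eq_iInf_map_conj A ▸ iInf_le _ _
  · exact map_conj_eq_map_conj_out hK g ▸ iInf_le _ _

theorem index_normalCore_le_pow {A K : Subgroup G} (hK : K ≤ normalizer A) [K.FiniteIndex] :
    A.normalCore.index ≤ A.index ^ K.index := by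
  have := Fintype.ofFinite (G ⧸ K)
  calc A.normalCore.index ≤ ∏ q : G ⧸ K, (A.map (MulAut.conj q.out : G →* G)).index :=
        normalCore_eq_iInf_map_conj_out hK ▸ index_iInf_le _
    _ = A.index ^ K.index := by
        rw [Finset.prod_congr rfl fun q _ => index_map_equiv A (MulAut.conj q.out),
          Finset.prod_const, Finset.card_univ, ← Nat.card_eq_fintype_card]
        rfl

theorem range_le_normalizer_map {H : Type*} [Group H] (f : H →* G) (A : Subgroup H) [A.Normal] :
    f.range ≤ normalizer (A.map f : Set G) := by
  rw [f.range_eq_map, ← normalizer_eq_top (H := A)]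
  exact le_normalizer_map f

theorem exists_normal_isMulCommutative_coprime_of_injective {H : Type*} [Group H] {p : ℕ}
    {f : H →* G} (hf : Function.Injective f) [f.range.FiniteIndex] {A : Subgroup H} [A.Normal]
    [IsMulCommutative A] (hAp : (Nat.card A).Coprime p) :
    ∃ C : Subgroup G, C.Normal ∧ IsMulCommutative C ∧ (Nat.card C).Coprime p ∧
      C.index ≤ (A.index * f.range.index) ^ f.range.index := by
  refine ⟨(A.map f).normalCore, inferInstance, isMulCommutative_of_le (normalCore_le _), ?_, ?_⟩
  · exact hAp.coprime_dvd_left (card_map_of_injective hf ▸ card_dvd_of_le (normalCore_le _))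
  · rw [← index_map_of_injective A hf]
    exact index_normalCore_le_pow (range_le_normalizer_map f A)

def subgroupOfEquivSubgroupOf (H K : Subgroup G) : H.subgroupOf K ≃* K.subgroupOf H where
  toFun x := ⟨⟨x.1.1, x.2⟩, x.1.2⟩
  invFun y := ⟨⟨y.1.1, y.2⟩, y.1.2⟩
  left_inv _ := rfl
  right_inv _ := rfl
  map_mul' _ _ := rfl

theorem range_subtype_comp_subgroupOfEquivSubgroupOf (H K : Subgroup G) :
    ((K.subgroupOf H).subtype.comp (subgroupOfEquivSubgroupOf H K).toMonoidHom).range =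
      K.subgroupOf H := by
  simp [MonoidHom.range_comp, ← MonoidHom.range_eq_map]

theorem index_subgroupOf_le_of_forall_card_le {N : Subgroup G} [N.Normal] (H : Subgroup G)
    [Finite H] {B : ℕ} (hB : ∀ Q : Subgroup (G ⧸ N), Finite Q → Nat.card Q ≤ B) :
    (N.subgroupOf H).index ≤ B := by
  have hker : N.subgroupOf H = ((QuotientGroup.mk' N).comp H.subtype).ker := by
    rw [← MonoidHom.comap_ker, QuotientGroup.ker_mk']
    rfl
  rw [hker, index_ker]
  exact hB _ (Finite.of_surjective _ (MonoidHom.rangeRestrict_surjective _))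

end Subgroup

theorem Sylow.card_le_card_of_injective {H G : Type*} [Group H] [Group G] [Finite G] {p : ℕ}
    [Fact p.Prime] {f : H →* G} (hf : Function.Injective f) (P : Sylow p H) (Q : Sylow p G) :
    Nat.card P ≤ Nat.card Q := by
  have := Finite.of_injective f hf
  rw [P.card_eq_multiplicity, Q.card_eq_multiplicity]
  exact Nat.le_of_dvd (pow_pos (Fact.out : p.Prime).pos _)
    (Nat.ordProj_dvd_ordProj_of_dvd Nat.card_pos.ne' (card_dvd_of_injective f hf) p)

/-- If `N` is a normal subgroup of `Γ` such that `Γ/N` has bounded finite subgroups and `N`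
is `p`-Jordan, then `Γ` is `p`-Jordan. -/
theorem p_jordan_of_normal_p_jordan_quotient_bounded
    (p : ℕ) (hp : p.Prime)
    (Γ : Type*) [Group Γ] (N : Subgroup Γ) (hN : N.Normal)
    (hbound : ∃ B : ℕ, ∀ Q : Subgroup (Γ ⧸ N), Finite Q → Nat.card Q ≤ B)
    (hpJordan : ∃ J e : ℕ, 0 < J ∧ ∀ G' : Subgroup ↥N, Finite G' →
      ∀ G'p : Sylow p ↥G',
        ∃ A : Subgroup ↥G', A.Normal ∧ IsMulCommutative A ∧
          Nat.Coprime (Nat.card A) p ∧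
          A.index ≤ J * (Nat.card G'p) ^ e) :
    ∃ J' e' : ℕ, 0 < J' ∧ ∀ G : Subgroup Γ, Finite G →
      ∀ Gp : Sylow p ↥G,
        ∃ A : Subgroup ↥G, A.Normal ∧ IsMulCommutative A ∧
          Nat.Coprime (Nat.card A) p ∧
          A.index ≤ J' * (Nat.card Gp) ^ e' := by
  have := Fact.mk hp
  obtain ⟨B, hB⟩ := hbound
  obtain ⟨J, e, -, hJordan⟩ := hpJordan
  refine ⟨(J * B + 1) ^ B, e * B, by positivity, fun G _ Gp => ?_⟩
  set ι := (N.subgroupOf G).subtype.comp (subgroupOfEquivSubgroupOf G N).toMonoidHom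
  have hι : Function.Injective ι := (N.subgroupOf G).subtype_injective.comp (MulEquiv.injective _)
  have hιB : ι.range.index ≤ B :=
    range_subtype_comp_subgroupOfEquivSubgroupOf G N ▸ index_subgroupOf_le_of_forall_card_le G hB
  have := Finite.of_injective ι hι
  let P : Sylow p (G.subgroupOf N) := Classical.arbitrary _
  obtain ⟨A, hA, hAcomm, hAp, hAidx⟩ := hJordan (G.subgroupOf N) inferInstance P
  obtain ⟨C, hC, hCcomm, hCp, hCidx⟩ := exists_normal_isMulCommutative_coprime_of_injective hι hAp
  refine ⟨C, hC, hCcomm, hCp, hCidx.trans ?_⟩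
  have hbase : A.index * ι.range.index ≤ (J * B + 1) * Nat.card Gp ^ e :=
    calc A.index * ι.range.index ≤ J * Nat.card P ^ e * B := Nat.mul_le_mul hAidx hιB
      _ ≤ J * Nat.card Gp ^ e * B := by gcongr; exact Sylow.card_le_card_of_injective hι P Gp
      _ ≤ (J * B + 1) * Nat.card Gp ^ e := by
        rw [add_one_mul, mul_right_comm]; exact Nat.le_add_right _ _
  calc (A.index * ι.range.index) ^ ι.range.index
      ≤ ((J * B + 1) * Nat.card Gp ^ e) ^ ι.range.index := Nat.pow_le_pow_left hbase _
    _ ≤ ((J * B + 1) * Nat.card Gp ^ e) ^ B := Nat.pow_le_pow_right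
        (Nat.mul_pos (Nat.succ_pos _) (pow_pos Nat.card_pos _)) hιB
    _ = (J * B + 1) ^ B * Nat.card Gp ^ (e * B) := by rw [mul_pow, ← pow_mul]
end

section
/- Let p be a prime number, let r and s be positive integers, let B and e be positive real constants, and let H be a finite group with a normal subgroup F such that the quotient H/F is abelian and generated by r elements. Suppose that |F| ≤ B·|F_p|^e, where F_p is a p-Sylow subgroup of F, and that F is generated by s elements. Then H contains a characteristic abelian subgroup of order coprime to p and of index at most B^{r+s}·|H_p|^{e(r+s)+1}, where H_p is a p-Sylow subgroup of H. -/
/-!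
Take `A` to be the elements of order prime to `p` in the center `Z(H)`: it is characteristic and
abelian, and `Z(H)/A` is a `p`-group, so `[Z(H) : A] ≤ |H_p|`. As `H/F` is abelian, every
commutator of `H` lies in `F`, and `H` is generated by `r + s` elements, so the classical bound
`[H : Z(H)] ≤ |{commutators}|^rank(H)` gives `[H : Z(H)] ≤ |F|^(r+s) ≤ (B |H_p|^e)^(r+s)`,
using `|F_p| ≤ |H_p|`.
-/

open Subgroup

theorem Subgroup.closure_image_subtype_union_eq_top {G : Type*} [Group G] {N : Subgroup G}
    [N.Normal] {s : Set N} {t : Set G} (hs : closure s = ⊤)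
    (ht : closure ((↑) '' t : Set (G ⧸ N)) = ⊤) : closure (N.subtype '' s ∪ t) = ⊤ := by
  set K := closure (N.subtype '' s ∪ t)
  have hNK : N ≤ K := by
    calc N = closure (N.subtype '' s) := by
          rw [← MonoidHom.map_closure, hs, ← MonoidHom.range_eq_map, range_subtype]
      _ ≤ K := closure_mono Set.subset_union_left
  have hKN : K.map (QuotientGroup.mk' N) = ⊤ := by
    rw [MonoidHom.map_closure, eq_top_iff, ← ht]
    exact closure_mono (Set.image_mono Set.subset_union_right)
  rw [← sup_eq_left.mpr hNK, ← QuotientGroup.ker_mk' N, ← comap_map_eq, hKN, comap_top]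

theorem Group.rank_le_rank_add_rank_quotient {G : Type*} [Group G] [Group.FG G] (N : Subgroup G)
    [N.Normal] [Group.FG N] [Group.FG (G ⧸ N)] :
    Group.rank G ≤ Group.rank N + Group.rank (G ⧸ N) := by
  classical
  obtain ⟨S, hScard, hS⟩ := Group.rank_spec N
  obtain ⟨T, hTcard, hT⟩ := Group.rank_spec (G ⧸ N)
  have hgen : closure ((S.image N.subtype ∪ T.image Quotient.out : Finset G) : Set G)
      = ⊤ := by
    push_cast
    refine closure_image_subtype_union_eq_top hS ?_
    have hout : (QuotientGroup.mk ∘ Quotient.out : G ⧸ N → G ⧸ N) = id :=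
      funext QuotientGroup.out_eq'
    rwa [← Set.image_comp, hout, Set.image_id]
  calc Group.rank G ≤ _ := Group.rank_le hgen
    _ ≤ S.card + T.card := (Finset.card_union_le _ _).trans (by
        gcongr <;> exact Finset.card_image_le)
    _ = _ := by rw [hScard, hTcard]

theorem Subgroup.commutator_le_of_forall_mul_comm {G : Type*} [Group G] {N : Subgroup G}
    [N.Normal] (h : ∀ a b : G ⧸ N, a * b = b * a) : _root_.commutator G ≤ N := by
  let _ : CommGroup (G ⧸ N) := { mul_comm := h }
  simpa using Abelianization.commutator_subset_ker (QuotientGroup.mk' N)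

theorem card_commutatorSet_le_of_commutator_le {G : Type*} [Group G] {N : Subgroup G}
    [Finite N] (h : commutator G ≤ N) : Nat.card (commutatorSet G) ≤ Nat.card N := by
  rw [commutator_eq_closure] at h
  exact Nat.card_mono (Set.toFinite _) (subset_closure.trans h)

theorem Subgroup.index_center_le_card_pow_of_forall_mul_comm {G : Type*} [Group G] [Finite G]
    (N : Subgroup G) [N.Normal] (h : ∀ a b : G ⧸ N, a * b = b * a) {r s : ℕ}
    (hr : Group.rank (G ⧸ N) ≤ r) (hs : Group.rank N ≤ s) :
    (center G).index ≤ Nat.card N ^ (r + s) :=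
  calc (center G).index ≤ Nat.card (commutatorSet G) ^ Group.rank G := index_center_le_pow G
    _ ≤ Nat.card N ^ Group.rank G := Nat.pow_le_pow_left
        (card_commutatorSet_le_of_commutator_le (commutator_le_of_forall_mul_comm h)) _
    _ ≤ Nat.card N ^ (r + s) := Nat.pow_le_pow_right Nat.card_pos
        ((Group.rank_le_rank_add_rank_quotient N).trans (by omega))

theorem Sylow.card_le_card_of_isPGroup {G : Type*} [Group G] [Finite G] {p : ℕ} [Fact p.Prime]
    (P : Sylow p G) {Q : Type*} [Group Q] [Finite Q] (hQ : IsPGroup p Q)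
    (h : Nat.card Q ∣ Nat.card G) : Nat.card Q ≤ Nat.card P := by
  obtain ⟨n, hn⟩ := IsPGroup.iff_card.mp hQ
  rw [hn] at h ⊢
  exact Nat.le_of_dvd Nat.card_pos (P.pow_dvd_card_of_pow_dvd_card h)

namespace Subgroup

variable (G : Type*) [Group G] (p : ℕ)

def centerCoprimePart : Subgroup G where
  carrier := {x | x ∈ center G ∧ (orderOf x).Coprime p}
  one_mem' := ⟨one_mem _, by simp⟩
  mul_mem' := by
    rintro x y ⟨hx, hxp⟩ ⟨hy, hyp⟩
    have hxy : Commute x y := (mem_center_iff.mp hx y).symm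
    exact ⟨mul_mem hx hy, ((hxp.mul_left hyp).coprime_dvd_left
      (hxy.orderOf_mul_dvd_lcm.trans (Nat.lcm_dvd_mul _ _)))⟩
  inv_mem' := fun ⟨hx, hxp⟩ ↦ ⟨inv_mem hx, by simpa using hxp⟩

variable {G p}

theorem mem_centerCoprimePart {x : G} :
    x ∈ centerCoprimePart G p ↔ x ∈ center G ∧ (orderOf x).Coprime p :=
  Iff.rfl

theorem centerCoprimePart_le_center : centerCoprimePart G p ≤ center G := fun _ hx ↦ hx.1

instance : (centerCoprimePart G p).Characteristic := by
  refine characteristic_iff_le_comap.mpr fun φ x ⟨hx, hxp⟩ ↦ ⟨?_, ?_⟩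
  · exact characteristic_iff_le_comap.mp inferInstance φ hx
  · simpa [MulEquiv.orderOf_eq] using hxp

instance : IsMulCommutative (centerCoprimePart G p) :=
  le_centralizer_iff_isMulCommutative.mp
    (centerCoprimePart_le_center.trans (center_le_centralizer _))

theorem coprime_card_centerCoprimePart [Finite G] (hp : p.Prime) :
    (Nat.card (centerCoprimePart G p)).Coprime p := by
  have := Fact.mk hp
  refine (hp.coprime_iff_not_dvd.mpr fun hdvd ↦ ?_).symm
  obtain ⟨x, hx⟩ := exists_prime_orderOf_dvd_card' p hdvd
  have hxp := (mem_centerCoprimePart.mp x.2).2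
  rw [orderOf_coe, hx, Nat.coprime_self] at hxp
  exact hp.one_lt.ne' hxp

theorem isPGroup_center_quotient_centerCoprimePart [Finite G] (hp : p.Prime) :
    IsPGroup p (center G ⧸ (centerCoprimePart G p).subgroupOf (center G)) := by
  refine fun g ↦ QuotientGroup.induction_on g fun z ↦ ?_
  -- killing the `p`-part of the order of `z` leaves an element of order coprime to `p`
  refine ⟨(orderOf (z : G)).factorization p, ?_⟩
  rw [← QuotientGroup.mk_pow, QuotientGroup.eq_one_iff, mem_subgroupOf, coe_pow]
  refine ⟨pow_mem z.2 _, ?_⟩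
  rw [orderOf_pow, Nat.gcd_eq_right (Nat.ordProj_dvd _ p)]
  exact (Nat.coprime_ordCompl hp (orderOf_pos (z : G)).ne').symm

theorem relIndex_centerCoprimePart_le [Finite G] [Fact p.Prime] (P : Sylow p G) :
    (centerCoprimePart G p).relIndex (center G) ≤ Nat.card P :=
  P.card_le_card_of_isPGroup (isPGroup_center_quotient_centerCoprimePart Fact.out)
    ((relIndex_dvd_index_of_le centerCoprimePart_le_center).trans (index_dvd_card _))

end Subgroup

theorem characteristic_abelian_of_abelian_quotient_general
    (p : ℕ) (hp : p.Prime) (r s : ℕ)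
    (B e : ℝ) (hB : 0 < B) (he : 0 < e)
    (H : Type*) [Group H] [Finite H]
    (F : Subgroup H) (hF : F.Normal)
    (habelian : ∀ a b : H ⧸ F, a * b = b * a)
    (hgenQ : ∃ S : Finset (H ⧸ F), S.card ≤ r ∧
      Subgroup.closure (S : Set (H ⧸ F)) = ⊤)
    (hcard : ∀ Fp : Sylow p ↥F, (Nat.card F : ℝ) ≤ B * (Nat.card Fp : ℝ) ^ e)
    (hgenF : ∃ S : Finset ↥F, S.card ≤ s ∧ Subgroup.closure (S : Set ↥F) = ⊤)
    (Hp : Sylow p H) :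
    ∃ A : Subgroup H, A.Characteristic ∧ IsMulCommutative A ∧
      Nat.Coprime (Nat.card A) p ∧
      (A.index : ℝ) ≤ B ^ (r + s) * (Nat.card Hp : ℝ) ^ (e * (r + s) + 1) := by
  have := Fact.mk hp
  obtain ⟨T, hTcard, hT⟩ := hgenQ
  obtain ⟨S, hScard, hS⟩ := hgenF
  obtain ⟨Fp⟩ : Nonempty (Sylow p F) := inferInstance
  refine ⟨centerCoprimePart H p, inferInstance, inferInstance,
    coprime_card_centerCoprimePart hp, ?_⟩
  have hcenter : (center H).index ≤ Nat.card F ^ (r + s) :=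
    index_center_le_card_pow_of_forall_mul_comm F habelian
      ((Group.rank_le hT).trans hTcard) ((Group.rank_le hS).trans hScard)
  have hindex : (centerCoprimePart H p).index ≤ Nat.card Hp * Nat.card F ^ (r + s) := by
    rw [← relIndex_mul_index centerCoprimePart_le_center]
    exact Nat.mul_le_mul (relIndex_centerCoprimePart_le Hp) hcenter
  have hFp : Nat.card Fp ≤ Nat.card Hp := Hp.card_le_card_of_isPGroup Fp.isPGroup'
    ((card_subgroup_dvd_card _).trans (card_subgroup_dvd_card F))
  have hcardF : (Nat.card F : ℝ) ≤ B * (Nat.card Hp : ℝ) ^ e := by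
    grw [hcard Fp, hFp]
  have hHp : (0 : ℝ) < Nat.card Hp := by exact_mod_cast Nat.card_pos
  calc ((centerCoprimePart H p).index : ℝ)
      ≤ Nat.card Hp * (Nat.card F : ℝ) ^ (r + s) := by exact_mod_cast hindex
    _ ≤ Nat.card Hp * (B * (Nat.card Hp : ℝ) ^ e) ^ (r + s) := by gcongr
    _ = B ^ (r + s) * (Nat.card Hp : ℝ) ^ (e * (r + s) + 1) := by
      rw [mul_pow, ← Real.rpow_mul_natCast hHp.le, Real.rpow_add_one hHp.ne']
      push_cast
      ring

/-- Let `1 → F → H → H̄ → 1` be an exact sequence of finite groups with `H̄` abelian and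
generated by `r` elements. If `|F| ≤ B * |F_p|^e` and `F` is generated by `s` elements, then
`H` contains a characteristic abelian subgroup of order coprime to `p` and index at most
`B^(r+s) * |H_p|^(e(r+s)+1)`. -/
theorem characteristic_abelian_of_abelian_quotient
    (p : ℕ) (hp : p.Prime) (r s : ℕ) (hr : 0 < r) (hs : 0 < s)
    (B e : ℝ) (hB : 0 < B) (he : 0 < e)
    (H : Type*) [Group H] [Finite H]
    (F : Subgroup H) (hF : F.Normal)
    (habelian : ∀ a b : H ⧸ F, a * b = b * a)
    (hgenQ : ∃ S : Finset (H ⧸ F), S.card ≤ r ∧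
      Subgroup.closure (S : Set (H ⧸ F)) = ⊤)
    (hcard : ∀ Fp : Sylow p ↥F, (Nat.card F : ℝ) ≤ B * (Nat.card Fp : ℝ) ^ e)
    (hgenF : ∃ S : Finset ↥F, S.card ≤ s ∧ Subgroup.closure (S : Set ↥F) = ⊤)
    (Hp : Sylow p H) :
    ∃ A : Subgroup H, A.Characteristic ∧ IsMulCommutative A ∧
      Nat.Coprime (Nat.card A) p ∧
      (A.index : ℝ) ≤ B ^ (r + s) * (Nat.card Hp : ℝ) ^ (e * (r + s) + 1) :=
  characteristic_abelian_of_abelian_quotient_general p hp r s B e hB he H F hF habelian hgenQ hcard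
    hgenF Hp
end
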